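/- arXiv:1701.05781 — 3 statements merged into one kernel-verified Lean document; each statement's English description precedes it below -/
import Mathlib

section
/- Let U be a characteristic subgroup of index 2 in a group T. Suppose the centre of U is trivial and every automorphism of U extends to an automorphism of T. Then the restriction map Aut(T) → Aut(U) is a group isomorphism. -/
/-- Let U be a characteristic subgroup of index 2 in a group T. Suppose the centre of U is
trivial and every automorphism of U extends to an automorphism of T. Then the restriction map
Aut(T) → Aut(U) is a group isomorphism. -/
theorem stmt0 {T : Type*} [Group T] (U : Subgroup T) [U.Characteristic]
    (hindex : U.index = 2)
    (hcenter : Subgroup.center ↥U = ⊥)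
    (hext : ∀ φ : MulAut ↥U, ∃ ψ : MulAut T, ∀ u : U, ψ (u : T) = ((φ u : U) : T)) :
    ∃ e : MulAut T ≃* MulAut ↥U, ∀ (ψ : MulAut T) (u : U), (((e ψ) u : U) : T) = ψ (u : T) := by
  have hmem : ∀ (ψ : MulAut T) (u : T), u ∈ U → ψ u ∈ U := by
    intro ψ u hu
    have h := Subgroup.characteristic_iff_comap_eq.mp ‹U.Characteristic› ψ
    rw [← h] at hu
    exact hu
  let r : MulAut T →* MulAut ↥U :=
  { toFun := fun ψ =>
    { toFun := fun u => ⟨ψ u, hmem ψ u u.2⟩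
      invFun := fun u => ⟨ψ⁻¹ (u : T), hmem ψ⁻¹ (u : T) u.2⟩
      left_inv := fun u => Subtype.ext (show ψ⁻¹ (ψ (u : T)) = (u : T) by simp)
      right_inv := fun u => Subtype.ext (show ψ (ψ⁻¹ (u : T)) = (u : T) by simp)
      map_mul' := fun u v => Subtype.ext (show ψ ((u * v : ↥U) : T) = ψ (u : T) * ψ (v : T) by push_cast; simp) }
    map_one' := by ext u; rfl
    map_mul' := fun ψ₁ ψ₂ => by ext u; rfl }
  have hinj : Function.Injective r := by
    rw [injective_iff_map_eq_one]
    intro ψ hψ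
    have hfix : ∀ u : T, u ∈ U → ψ u = u := by
      intro u hu
      have := congrArg (fun f : MulAut ↥U => ((f ⟨u, hu⟩ : ↥U) : T)) hψ
      simpa [r] using this
    ext t
    -- c := t⁻¹ * ψ t ∈ U
    have hc : t⁻¹ * ψ t ∈ U := by
      rw [Subgroup.mul_mem_iff_of_index_two hindex]
      constructor
      · intro h
        exact hmem ψ t (by simpa using h)
      · intro h
        have := hmem ψ⁻¹ (ψ t) h
        simpa using this
    -- c commutes with all of U
    have hcomm : ∀ u : T, u ∈ U → (t⁻¹ * ψ t) * u = u * (t⁻¹ * ψ t) := by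
      intro u hu
      have hconj : t * u * t⁻¹ ∈ U := Subgroup.Normal.conj_mem inferInstance u hu t
      have h1 : ψ (t * u * t⁻¹) = t * u * t⁻¹ := hfix _ hconj
      have h2 : ψ t * u * (ψ t)⁻¹ = t * u * t⁻¹ := by
        rw [← h1, map_mul, map_mul, map_inv, hfix u hu]
      have := congrArg (fun x => t⁻¹ * x * ψ t) h2
      simp only [mul_assoc, inv_mul_cancel, mul_one] at this
      group at this ⊢
      rw [this]
    have hz : (⟨t⁻¹ * ψ t, hc⟩ : ↥U) ∈ Subgroup.center ↥U := by
      rw [Subgroup.mem_center_iff]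
      intro g
      exact Subtype.ext ((hcomm g g.2).symm)
    rw [hcenter, Subgroup.mem_bot] at hz
    have : t⁻¹ * ψ t = 1 := congrArg Subtype.val hz
    have h2 : ψ t = t := (inv_mul_eq_one.mp this).symm
    simpa using h2
  have hsurj : Function.Surjective r := by
    intro φ
    obtain ⟨ψ, hψ⟩ := hext φ
    refine ⟨ψ, ?_⟩
    ext u
    simpa [r] using hψ u
  exact ⟨MulEquiv.ofBijective r ⟨hinj, hsurj⟩, fun ψ u => rfl⟩
end

section
/- Let q be an odd prime power, F = GF(q²), σ : x ↦ x^q, and A ∈ GL(2,F) with det(A) a non-square of F. Then the eigenvalues λ₁, λ₂ of A·A^σ lie in F, are distinct, and either both lie in F₀ = GF(q) with λ₁λ₂ a non-square of F₀, or λ₁^σ = λ₂ and λ₁, λ₂ are non-squares of F lying outside F₀. -/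
open Polynomial

private lemma charpoly_fin_two_aux {R : Type*} [CommRing R] (M : Matrix (Fin 2) (Fin 2) R) :
    M.charpoly = X ^ 2 - C M.trace * X + C M.det := by
  rw [Matrix.charpoly, Matrix.det_fin_two, Matrix.charmatrix_apply_eq,
    Matrix.charmatrix_apply_eq,
    Matrix.charmatrix_apply_ne _ _ _ (by decide : (0 : Fin 2) ≠ 1),
    Matrix.charmatrix_apply_ne _ _ _ (by decide : (1 : Fin 2) ≠ 0),
    Matrix.trace_fin_two, Matrix.det_fin_two, map_add, map_sub, map_mul, map_mul]
  ring

/-- The eigenvalues λ₁, λ₂ of A·A^σ lie in F = GF(q²), are distinct, and either both lie in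
GF(q) with λ₁λ₂ a non-square of GF(q), or λ₁^σ = λ₂ and λ₁, λ₂ are non-squares of F outside
GF(q). -/
theorem stmt3 (p n q : ℕ) (hp : p.Prime) (hpodd : Odd p) (hn : 0 < n) (hq : q = p ^ n)
    (F : Type*) [Field F] [Fintype F] (hF : Fintype.card F = q ^ 2)
    (A : Matrix (Fin 2) (Fin 2) F) (hdet0 : A.det ≠ 0) (hns : ¬ IsSquare A.det) :
    ∃ l₁ l₂ : F,
      (A * A.map (fun x => x ^ q)).charpoly = (X - C l₁) * (X - C l₂) ∧ l₁ ≠ l₂ ∧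
      ((l₁ ^ q = l₁ ∧ l₂ ^ q = l₂ ∧ l₁ * l₂ ≠ 0 ∧
          ¬ ∃ y : F, y ^ q = y ∧ y ^ 2 = l₁ * l₂) ∨
       (l₁ ^ q = l₂ ∧ ¬ IsSquare l₁ ∧ ¬ IsSquare l₂ ∧ l₁ ^ q ≠ l₁ ∧ l₂ ^ q ≠ l₂)) := by
  haveI : Fact p.Prime := ⟨hp⟩
  have hp2 : p ≠ 2 := by
    rintro rfl
    norm_num [Nat.odd_iff] at hpodd
  have hqodd : Odd q := by rw [hq]; exact hpodd.pow
  have hq1 : 1 < q := by rw [hq]; exact Nat.one_lt_pow hn.ne' hp.one_lt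
  -- the characteristic of F is p
  haveI hcharF : CharP F p := by
    obtain ⟨m, hrp, hcard⟩ := FiniteField.card F (ringChar F)
    have h1 : ringChar F ∣ Fintype.card F := hcard ▸ dvd_pow_self _ m.pos.ne'
    rw [hF, hq, ← pow_mul] at h1
    have : ringChar F = p :=
      (Nat.prime_dvd_prime_iff_eq hrp hp).mp (hrp.dvd_of_dvd_pow h1)
    exact this ▸ ringChar.charP F
  have hring2 : ringChar F ≠ 2 := by
    rw [ringChar.eq F p]; exact hp2
  haveI : Fact (2 < p) := ⟨lt_of_le_of_ne hp.two_le (Ne.symm hp2)⟩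
  have hneg : (-1 : F) ≠ 1 := CharP.neg_one_ne_one F p
  -- basic q-power arithmetic on F
  have hpow2 : ∀ x : F, (x ^ q) ^ q = x := fun x => by
    rw [← pow_mul, ← sq, ← hF]; exact FiniteField.pow_card x
  have hadd : ∀ x y : F, (x + y) ^ q = x ^ q + y ^ q := fun x y => by
    rw [hq]; exact add_pow_char_pow x y p n
  have hsub : ∀ x y : F, (x - y) ^ q = x ^ q - y ^ q := fun x y => by
    rw [sub_eq_add_neg, hadd, hqodd.neg_pow, ← sub_eq_add_neg]
  have htwo : (2 : F) ≠ 0 := fun h => hneg (by linear_combination -h)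
  have h2q : (2 : F) ^ q = 2 := by
    have h := hadd 1 1
    rw [one_pow] at h
    norm_num at h ⊢
    exact h
  have h4q : (4 : F) ^ q = 4 := by
    rw [show (4 : F) = 2 * 2 by norm_num, mul_pow, h2q]
  -- numerical facts
  have ⟨k, hk⟩ := hqodd
  have hq2mod : q % 2 = 1 := by omega
  have hcardodd : Fintype.card F % 2 = 1 := by
    rw [hF, Nat.pow_mod, hq2mod]
  have hcpos : 0 < Fintype.card F := Fintype.card_pos
  have hMK : Fintype.card F / 2 = (q + 1) * ((q - 1) / 2) := by
    have h1 : (q - 1) / 2 = k := by omega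
    have h2 : Fintype.card F = 2 * ((q + 1) * k) + 1 := by rw [hF, hk]; ring
    rw [h1, h2, Nat.mul_add_div (by norm_num)]
    norm_num
  have hML : Fintype.card F / 2 = (q - 1) * ((q + 1) / 2) := by
    have h1 : (q + 1) / 2 = k + 1 := by omega
    have h3 : q - 1 = 2 * k := by omega
    have h2 : Fintype.card F = 2 * ((q - 1) * (k + 1)) + 1 := by rw [hF, h3, hk]; ring
    rw [h1, h2, Nat.mul_add_div (by norm_num)]
    norm_num
  -- Euler's criterion for non-squares
  have key : ∀ x : F, x ≠ 0 → ¬ IsSquare x → x ^ (Fintype.card F / 2) = -1 := by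
    intro x hx hxs
    have h1 : x ^ (Fintype.card F / 2) * x ^ (Fintype.card F / 2) = 1 := by
      rw [← pow_add,
        show Fintype.card F / 2 + Fintype.card F / 2 = Fintype.card F - 1 by omega]
      exact FiniteField.pow_card_sub_one_eq_one x hx
    rcases mul_self_eq_one_iff.mp h1 with h | h
    · exact absurd ((FiniteField.isSquare_iff hring2 hx).mpr h) hxs
    · exact h
  have hfix1 : ∀ x : F, x ≠ 0 → x ^ q = x → x ^ (q - 1) = 1 := by
    intro x hx hxq
    have h : x ^ (q - 1) * x = 1 * x := by
      rw [one_mul, ← pow_succ, show q - 1 + 1 = q by omega]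
      exact hxq
    exact mul_right_cancel₀ hx h
  -- setting up trace and determinant
  set B := A * A.map (fun x => x ^ q) with hB
  set a := A.det with ha
  set t := B.trace with ht
  set d := B.det with hd
  have hmapdet : (A.map fun x => x ^ q).det = a ^ q := by
    rw [Matrix.det_fin_two, Matrix.map_apply, Matrix.map_apply, Matrix.map_apply,
      Matrix.map_apply, ha, Matrix.det_fin_two, hsub, mul_pow, mul_pow]
  have hdval : d = a * a ^ q := by
    rw [hd, hB, Matrix.det_mul, hmapdet, ha]
  have hdne : d ≠ 0 := by
    rw [hdval]; exact mul_ne_zero hdet0 (pow_ne_zero _ hdet0)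
  have hdq : d ^ q = d := by
    rw [hdval, mul_pow, hpow2]; exact mul_comm _ _
  have htval : t = A 0 0 * (A 0 0) ^ q + A 0 1 * (A 1 0) ^ q +
      (A 1 0 * (A 0 1) ^ q + A 1 1 * (A 1 1) ^ q) := by
    rw [ht, Matrix.trace_fin_two, hB, Matrix.mul_apply, Matrix.mul_apply,
      Fin.sum_univ_two, Fin.sum_univ_two]
    simp [Matrix.map_apply]
  have htq : t ^ q = t := by
    rw [htval, hadd, hadd, hadd, mul_pow, mul_pow, mul_pow, mul_pow,
      hpow2, hpow2, hpow2, hpow2]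
    ring
  -- d is a non-square "in F₀"
  have hd1 : d = a ^ (q + 1) := by rw [hdval, pow_succ, mul_comm]
  have hEa : a ^ (Fintype.card F / 2) = -1 := key a hdet0 hns
  have hdK : d ^ ((q - 1) / 2) = -1 := by
    rw [hd1, ← pow_mul, ← hMK]; exact hEa
  have hnoy : ∀ y : F, y ^ q = y → y ^ 2 ≠ d := by
    intro y hyq hy2
    have hy0 : y ≠ 0 := by
      rintro rfl; exact hdne (by simpa using hy2.symm)
    have hKd : d ^ ((q - 1) / 2) = 1 := by
      rw [← hy2, ← pow_mul, show 2 * ((q - 1) / 2) = q - 1 by omega,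
        hfix1 y hy0 hyq]
    rw [hdK] at hKd
    exact hneg hKd
  -- the discriminant
  set Δ := t ^ 2 - 4 * d with hΔdef
  have hΔq : Δ ^ q = Δ := by
    rw [hΔdef, hsub, mul_pow, h4q, hdq, pow_right_comm, htq]
  have hΔsq : IsSquare Δ := by
    rcases eq_or_ne Δ 0 with h | h
    · exact ⟨0, by rw [h, mul_zero]⟩
    · rw [FiniteField.isSquare_iff hring2 h, hML, pow_mul, hfix1 Δ h hΔq, one_pow]
  have hfour : (4 : F) ≠ 0 := by
    rw [show (4 : F) = 2 * 2 by norm_num]; exact mul_ne_zero htwo htwo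
  have hΔne : Δ ≠ 0 := by
    intro h0
    rw [hΔdef] at h0
    refine hnoy (t / 2) ?_ ?_
    · rw [div_pow, htq, h2q]
    · rw [div_pow, show t ^ 2 = 4 * d by linear_combination h0,
        show (2 : F) ^ 2 = 4 by norm_num]
      exact mul_div_cancel_left₀ d hfour
  obtain ⟨s, hs⟩ := hΔsq
  have hsne : s ≠ 0 := fun h => hΔne (by rw [hs, h, mul_zero])
  have hss : s * s = t ^ 2 - 4 * d := by rw [← hs, hΔdef]
  -- the eigenvalues
  refine ⟨(t + s) / 2, (t - s) / 2, ?_⟩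
  set l₁ := (t + s) / 2 with hl₁
  set l₂ := (t - s) / 2 with hl₂
  have h21 : 2 * l₁ = t + s := by rw [hl₁, mul_comm, div_mul_cancel₀ _ htwo]
  have h22 : 2 * l₂ = t - s := by rw [hl₂, mul_comm, div_mul_cancel₀ _ htwo]
  have hsum : l₁ + l₂ = t := mul_left_cancel₀ htwo (by linear_combination h21 + h22)
  have hprod : l₁ * l₂ = d := mul_left_cancel₀ hfour
    (by linear_combination (2 * l₂) * h21 + (t + s) * h22 - hss)
  have hne : l₁ ≠ l₂ := by
    intro h
    have h2s : (2 : F) * s = 0 := by linear_combination h22 - h21 + 2 * h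
    exact hsne ((mul_eq_zero.mp h2s).resolve_left htwo)
  have hcp : B.charpoly = (X - C l₁) * (X - C l₂) := by
    rw [charpoly_fin_two_aux B, ← ht, ← hd, ← hsum, ← hprod, map_add, map_mul]
    ring
  refine ⟨hcp, hne, ?_⟩
  by_cases hfix : l₁ ^ q = l₁
  · left
    have hl2q : l₂ ^ q = l₂ := by
      have h2 : l₂ = t - l₁ := by linear_combination hsum
      rw [h2, hsub, htq, hfix]
    refine ⟨hfix, hl2q, by rw [hprod]; exact hdne, ?_⟩
    rintro ⟨y, h1, h2⟩
    rw [hprod] at h2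
    exact hnoy y h1 h2
  · right
    have hroot : l₁ ^ 2 - t * l₁ + d = 0 := by
      rw [← hsum, ← hprod]; ring
    have hrootq : (l₁ ^ q) ^ 2 - t * (l₁ ^ q) + d = 0 := by
      calc (l₁ ^ q) ^ 2 - t * (l₁ ^ q) + d = (l₁ ^ 2 - t * l₁ + d) ^ q := by
            rw [hadd, hsub, mul_pow, htq, hdq, pow_right_comm]
        _ = 0 := by rw [hroot]; exact zero_pow (by omega)
    have hswap : l₁ ^ q = l₂ := by
      have hfac : (l₁ ^ q - l₁) * (l₁ ^ q - l₂) = 0 := by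
        linear_combination hrootq - (l₁ ^ q) * hsum + hprod
      rcases mul_eq_zero.mp hfac with h | h
      · exact absurd (sub_eq_zero.mp h) hfix
      · exact sub_eq_zero.mp h
    have hl2q : l₂ ^ q = l₁ := by rw [← hswap, hpow2]
    have hl1ne0 : l₁ ≠ 0 := fun h => hdne (by rw [← hprod, h, zero_mul])
    have hl2ne0 : l₂ ≠ 0 := fun h => hdne (by rw [← hprod, h, mul_zero])
    have hl1d : l₁ ^ (q + 1) = d := by
      rw [pow_succ, hswap, mul_comm]; exact hprod
    have hl2d : l₂ ^ (q + 1) = d := by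
      rw [pow_succ, hl2q, mul_comm]
      rw [mul_comm] at hprod
      exact hprod
    have hns1 : ¬ IsSquare l₁ := by
      intro h
      rw [FiniteField.isSquare_iff hring2 hl1ne0, hMK, pow_mul, hl1d, hdK] at h
      exact hneg h
    have hns2 : ¬ IsSquare l₂ := by
      intro h
      rw [FiniteField.isSquare_iff hring2 hl2ne0, hMK, pow_mul, hl2d, hdK] at h
      exact hneg h
    have hne2 : l₂ ^ q ≠ l₂ := by
      rw [hl2q]; exact fun h => hne h
    exact ⟨hswap, hns1, hns2, hfix, hne2⟩
end

section
/- Let k and ℓ be positive integers with k ≡ 0 (mod 8), ℓ ≡ 0 (mod 8), and k ≢ ℓ (mod 16). Then for any odd prime power q there do not exist odd integers i, j with 1 ≤ i ≤ (q−1)/2 or 1 ≤ i ≤ (q+1)/2 such that {k, ℓ} = {oᵢ, oⱼ} where each of oᵢ, oⱼ is of the form 2(q−1)/gcd(q−1,i) or 2(q+1)/gcd(q+1,i) for odd i. Concretely: for odd i, if 2(q−1)/gcd(q−1,i) ≡ 8 (mod 16) then q ≡ 5 (mod 8), and if 2(q−1)/gcd(q−1,i) ≡ 0 (mod 16) then q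 ≡ 1 (mod 8); hence two such element orders cannot be ≡ 8 and ≡ 0 modulo 16 simultaneously for the same q. -/
/-- `m` is a possible order of an element of M(q²) outside PSL(2,q²): of the form
2(q−1)/gcd(q−1,i) or 2(q+1)/gcd(q+1,i) for some odd i in the appropriate range. -/
def IsTwistedOrder (q m : ℕ) : Prop :=
  (∃ i : ℕ, Odd i ∧ 1 ≤ i ∧ i ≤ (q - 1) / 2 ∧ m = 2 * (q - 1) / Nat.gcd (q - 1) i) ∨
  (∃ i : ℕ, Odd i ∧ 1 ≤ i ∧ i ≤ (q + 1) / 2 ∧ m = 2 * (q + 1) / Nat.gcd (q + 1) i)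

lemma helper17 (m i : ℕ) (hi : Odd i) :
    (8 ∣ (2 * m / Nat.gcd m i) ↔ 4 ∣ m) ∧ (16 ∣ (2 * m / Nat.gcd m i) ↔ 8 ∣ m) := by
  set g := Nat.gcd m i with hg
  have hgdvd : g ∣ m := Nat.gcd_dvd_left m i
  have hgodd : Odd g := by
    rcases Nat.even_or_odd g with he | ho
    · exfalso
      have : 2 ∣ i := dvd_trans he.two_dvd (Nat.gcd_dvd_right m i)
      exact (Nat.not_even_iff_odd.mpr hi) (even_iff_two_dvd.mpr this)
    · exact ho
  have heq : 2 * m / g = 2 * (m / g) := Nat.mul_div_assoc 2 hgdvd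
  have hmt : m = g * (m / g) := (Nat.mul_div_cancel' hgdvd).symm
  set t := m / g with ht
  have key : ∀ a : ℕ, (2 ^ a ∣ t ↔ 2 ^ a ∣ m) := by
    intro a
    constructor
    · intro h; rw [hmt]; exact Dvd.dvd.mul_left h g
    · intro h
      rw [hmt] at h
      have hco : Nat.Coprime (2 ^ a) g :=
        Nat.Coprime.pow_left a ((Nat.coprime_two_left).mpr hgodd)
      exact hco.dvd_of_dvd_mul_left h
  have k2 := key 2
  have k3 := key 3
  norm_num at k2 k3
  rw [heq]
  constructor
  · constructor
    · intro h; exact k2.mp (by omega)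
    · intro h; have := k2.mpr h; omega
  · constructor
    · intro h; exact k3.mp (by omega)
    · intro h; have := k3.mpr h; omega

/-- If k ≡ ℓ ≡ 0 (mod 8) and k ≢ ℓ (mod 16) then there is no orientably-regular map of type
(k,ℓ) on M(q²) for any odd prime power q: the two required element orders cannot both occur.
Concretely: for odd i, if 2(q−1)/gcd(q−1,i) ≡ 8 (mod 16) then q ≡ 5 (mod 8), and if
2(q−1)/gcd(q−1,i) ≡ 0 (mod 16) then q ≡ 1 (mod 8). -/
theorem stmt17 (q k ℓ : ℕ)
    (hq : ∃ p n : ℕ, p.Prime ∧ Odd p ∧ 0 < n ∧ q = p ^ n)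
    (hk : k % 8 = 0) (hl : ℓ % 8 = 0) (hkl : k % 16 ≠ ℓ % 16) :
    (∀ i : ℕ, Odd i → (2 * (q - 1) / Nat.gcd (q - 1) i) % 16 = 8 → q % 8 = 5) ∧
    (∀ i : ℕ, Odd i → (2 * (q - 1) / Nat.gcd (q - 1) i) % 16 = 0 → q % 8 = 1) ∧
    ¬ (IsTwistedOrder q k ∧ IsTwistedOrder q ℓ) := by
  have hq3 : 3 ≤ q ∧ q % 2 = 1 := by
    obtain ⟨p, n, hp, hpo, hn, rfl⟩ := hq
    have h1 : Odd (p ^ n) := hpo.pow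
    have h2 : 3 ≤ p := by
      have := hp.two_le
      rcases Nat.odd_iff.mp hpo with h
      omega
    have h3 : p ≤ p ^ n := Nat.le_self_pow hn.ne' p
    exact ⟨by omega, Nat.odd_iff.mp h1⟩
  refine ⟨?_, ?_, ?_⟩
  · intro i hi h
    have H := helper17 (q - 1) i hi
    omega
  · intro i hi h
    have H := helper17 (q - 1) i hi
    omega
  · rintro ⟨Hk, Hl⟩
    rcases Hk with ⟨i, hi, -, -, hke⟩ | ⟨i, hi, -, -, hke⟩ <;>
      rcases Hl with ⟨j, hj, -, -, hle⟩ | ⟨j, hj, -, -, hle⟩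
    · have H1 := helper17 (q - 1) i hi
      have H2 := helper17 (q - 1) j hj
      rw [← hke] at H1; rw [← hle] at H2; omega
    · have H1 := helper17 (q - 1) i hi
      have H2 := helper17 (q + 1) j hj
      rw [← hke] at H1; rw [← hle] at H2; omega
    · have H1 := helper17 (q + 1) i hi
      have H2 := helper17 (q - 1) j hj
      rw [← hke] at H1; rw [← hle] at H2; omega
    · have H1 := helper17 (q + 1) i hi
      have H2 := helper17 (q + 1) j hj
      rw [← hke] at H1; rw [← hle] at H2; omega
end
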